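/- arXiv:math/0301192 — 7 statements merged into one kernel-verified Lean document; each statement's English description precedes it below -/
import Mathlib

section
/- For any matrix A ∈ SU(3) and any vectors z, w ∈ ℂ³, the complex cross product satisfies the equivariance property (A·z) × (A·w) = A·(z × w). -/
set_option maxHeartbeats 1000000


/-- The complex cross product on ℂ³. -/
def ccross (z w : Fin 3 → ℂ) : Fin 3 → ℂ :=
  ![star (z 1) * star (w 2) - star (z 2) * star (w 1),
    star (z 2) * star (w 0) - star (z 0) * star (w 2),
    star (z 0) * star (w 1) - star (z 1) * star (w 0)]

lemma ccross_mulVec (M : Matrix (Fin 3) (Fin 3) ℂ) (z w : Fin 3 → ℂ) :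
    ccross (M.mulVec z) (M.mulVec w) =
      (((M.map star).adjugate).transpose).mulVec (ccross z w) := by
  funext i
  fin_cases i <;>
  · simp only [ccross, Matrix.mulVec, dotProduct, Fin.sum_univ_three,
      Matrix.transpose_apply, Matrix.adjugate_fin_three, Matrix.map_apply,
      Matrix.cons_val_zero, Matrix.cons_val_one, Matrix.head_cons,
      Matrix.cons_val_two, Matrix.tail_cons, Matrix.head_fin_const,
      Matrix.of_apply, star_add, star_sub, star_mul', Fin.isValue]
    norm_num [Matrix.cons_val_zero, Matrix.cons_val_one, Matrix.head_cons]
    ring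

theorem ccross_equivariant (A : Matrix (Fin 3) (Fin 3) ℂ)
    (hA : A ∈ Matrix.specialUnitaryGroup (Fin 3) ℂ) (z w : Fin 3 → ℂ) :
    ccross (A.mulVec z) (A.mulVec w) = A.mulVec (ccross z w) := by
  obtain ⟨hu, hdet⟩ := Matrix.mem_specialUnitaryGroup_iff.mp hA
  have hu' : A * A.conjTranspose = 1 := Matrix.mem_unitaryGroup_iff.mp hu
  have hinv : A⁻¹ = A.conjTranspose := Matrix.inv_eq_right_inv hu'
  have hadj : A.adjugate = A.conjTranspose := by
    rw [← hinv, Matrix.inv_def, hdet]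
    simp
  have key : (((A.map star).adjugate).transpose) = A := by
    have hmap : A.map star = A.conjTranspose.transpose := by
      ext i j; simp [Matrix.conjTranspose_apply, Matrix.map_apply]
    rw [hmap, ← Matrix.adjugate_transpose, Matrix.transpose_transpose,
      ← Matrix.adjugate_conjTranspose, hadj]
    simp
  rw [ccross_mulVec, key]
end

section
/- For every unit vector z ∈ ℂ³ and every vector w ∈ ℂ³ orthogonal to z (with respect to the standard Hermitian inner product), the matrix η(z) = z·zᵗ + M(conj z) satisfies η(z)·conj(w) = z × w, where × is the complex cross product. -/
/-- Skew-symmetric 3×3 matrix with M₁₂ = −w₃, M₁₃ = w₂, M₂₃ = −w₁. -/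
def skewM (w : Fin 3 → ℂ) : Matrix (Fin 3) (Fin 3) ℂ :=
  !![0, -w 2, w 1; w 2, 0, -w 0; -w 1, w 0, 0]

/-- η(z) = z·zᵗ + M(conj z). -/
def eta (z : Fin 3 → ℂ) : Matrix (Fin 3) (Fin 3) ℂ :=
  Matrix.of (fun i j => z i * z j) + skewM (fun i => star (z i))

theorem eta_mulVec_conj_orthogonal (z w : Fin 3 → ℂ)
    (hz : ∑ i, ‖z i‖ ^ 2 = 1) (hzw : ∑ i, star (z i) * w i = 0) :
    (eta z).mulVec (fun i => star (w i)) = ccross z w := by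
  have h : z 0 * (starRingEnd ℂ) (w 0) + z 1 * (starRingEnd ℂ) (w 1) +
      z 2 * (starRingEnd ℂ) (w 2) = 0 := by
    have := congrArg star hzw
    simpa [Fin.sum_univ_three, mul_comm, Complex.star_def] using this
  funext i
  fin_cases i <;>
    simp [eta, ccross, skewM, Matrix.mulVec, dotProduct, Fin.sum_univ_three,
      Complex.star_def]
  · linear_combination z 0 * h
  · linear_combination z 1 * h
  · linear_combination z 2 * h
end

section
/- Suppose A is an n×n complex matrix and b, c ∈ ℂⁿ are unit vectors such that the (n+1)×(n+1) block matrix [[A, b],[conj(c)ᵗ, 0]] lies in SU(n+1). Then A − b·conj(c)ᵗ lies in SU(n). -/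
open Matrix

theorem deformation_target_mem_SU (n : ℕ) (A : Matrix (Fin n) (Fin n) ℂ)
    (b c : Fin n → ℂ) (hb : ∑ i, ‖b i‖ ^ 2 = 1) (hc : ∑ i, ‖c i‖ ^ 2 = 1)
    (hblock :
      Matrix.fromBlocks A (Matrix.of fun i (_ : Fin 1) => b i)
          (Matrix.of fun (_ : Fin 1) j => star (c j)) 0 ∈
        Matrix.specialUnitaryGroup (Fin n ⊕ Fin 1) ℂ) :
    A - Matrix.of (fun i j => b i * star (c j)) ∈
      Matrix.specialUnitaryGroup (Fin n) ℂ := by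
  classical
  set bm : Matrix (Fin n) (Fin 1) ℂ := Matrix.of fun i (_ : Fin 1) => b i with hbm
  set cm : Matrix (Fin 1) (Fin n) ℂ := Matrix.of fun (_ : Fin 1) j => star (c j) with hcm
  set M : Matrix (Fin n ⊕ Fin 1) (Fin n ⊕ Fin 1) ℂ := Matrix.fromBlocks A bm cm 0 with hM
  rw [Matrix.mem_specialUnitaryGroup_iff] at hblock
  obtain ⟨huni, hdet⟩ := hblock
  have hMstar : star M = Matrix.fromBlocks Aᴴ cmᴴ bmᴴ 0 := by
    rw [hM, Matrix.star_eq_conjTranspose, Matrix.fromBlocks_conjTranspose,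
      Matrix.conjTranspose_zero]
  have huni1 : M * star M = 1 := (Matrix.mem_unitaryGroup_iff).mp huni
  have huni2 : star M * M = 1 := (Matrix.mem_unitaryGroup_iff').mp huni
  rw [hMstar, hM, Matrix.fromBlocks_multiply, ← Matrix.fromBlocks_one,
    Matrix.fromBlocks_inj] at huni1 huni2
  obtain ⟨h1, h2, h3, h4⟩ := huni1
  obtain ⟨h5, h6, h7, h8⟩ := huni2
  simp only [Matrix.mul_zero, Matrix.zero_mul, add_zero, zero_add] at h1 h2 h3 h4 h5 h6 h7 h8
  -- h1 : A * Aᴴ + bm * bmᴴ = 1 ; h2 : A * cmᴴ = 0 ; h3 : cm * Aᴴ = 0 ; h4 : cm * cmᴴ = 1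
  -- h5 : Aᴴ * A + cmᴴ * cm = 1 ; h6 : Aᴴ * bm = 0 ; h7 : bmᴴ * A = 0 ; h8 : bmᴴ * bm = 1
  have hof : (Matrix.of (fun i j => b i * star (c j)) : Matrix (Fin n) (Fin n) ℂ) = bm * cm := by
    ext i j
    simp [Matrix.mul_apply, hbm, hcm]
  rw [hof]
  set B : Matrix (Fin n) (Fin n) ℂ := A - bm * cm with hB
  have hBH : Bᴴ = Aᴴ - cmᴴ * bmᴴ := by
    rw [hB, Matrix.conjTranspose_sub, Matrix.conjTranspose_mul]
  have hBBH : B * Bᴴ = 1 := by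
    have expand : (A - bm * cm) * (Aᴴ - cmᴴ * bmᴴ) =
        (A * Aᴴ + bm * bmᴴ) - (A * cmᴴ) * bmᴴ - bm * (cm * Aᴴ)
          + bm * (cm * cmᴴ) * bmᴴ - bm * bmᴴ := by
      noncomm_ring
      simp only [Matrix.mul_assoc]
      abel
    rw [hB, hBH, expand, h1, h2, h3, h4]
    simp
  have hBb : Bᴴ * bm = -cmᴴ := by
    rw [hBH, Matrix.sub_mul, h6, Matrix.mul_assoc, h8, Matrix.mul_one]
    simp
  have hBA : Bᴴ * A = 1 - cmᴴ * cm := by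
    have hA : A = B + bm * cm := by simp [hB]
    have hBHB : Bᴴ * B = 1 := mul_eq_one_comm.mp hBBH
    rw [hA, Matrix.mul_add, hBHB, ← Matrix.mul_assoc, hBb]
    simp [Matrix.neg_mul, sub_eq_add_neg]
  -- determinant computation
  have hchain :
      (Matrix.fromBlocks 1 cmᴴ 0 1) * ((Matrix.fromBlocks Bᴴ 0 0 1) * M)
        * (Matrix.fromBlocks 1 cmᴴ 0 1) =
      Matrix.fromBlocks 1 0 cm (1 : Matrix (Fin 1) (Fin 1) ℂ) := by
    rw [hM, Matrix.fromBlocks_multiply, Matrix.fromBlocks_multiply,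
      Matrix.fromBlocks_multiply]
    simp [hBA, hBb, h4]
  have hdets := congrArg Matrix.det hchain
  rw [Matrix.det_mul, Matrix.det_mul, Matrix.det_mul,
    Matrix.det_fromBlocks_zero₂₁, Matrix.det_fromBlocks_zero₂₁,
    Matrix.det_fromBlocks_zero₁₂, hdet] at hdets
  simp only [Matrix.det_one, one_mul, mul_one] at hdets
  -- hdets : Bᴴ.det = 1
  have hdetB : B.det = 1 := by
    have := congrArg star hdets
    rwa [Matrix.det_conjTranspose, star_star, star_one] at this
  rw [Matrix.mem_specialUnitaryGroup_iff]
  exact ⟨Matrix.mem_unitaryGroup_iff.mpr hBBH, hdetB⟩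
end

section
/- Suppose A is an n×n complex matrix and b, c ∈ ℂⁿ are unit vectors such that [[A, b],[conj(c)ᵗ, 0]] ∈ SU(n+1). Then for every t ∈ ℝ the matrix [[A − b·conj(c)ᵗ·sin t, b·cos t],[conj(c)ᵗ·cos t, sin t]] lies in SU(n+1). -/
open Matrix

theorem deformation_mem_SU (n : ℕ) (A : Matrix (Fin n) (Fin n) ℂ)
    (b c : Fin n → ℂ) (hb : ∑ i, ‖b i‖ ^ 2 = 1) (hc : ∑ i, ‖c i‖ ^ 2 = 1)
    (hblock :
      Matrix.fromBlocks A (Matrix.of fun i (_ : Fin 1) => b i)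
          (Matrix.of fun (_ : Fin 1) j => star (c j)) 0 ∈
        Matrix.specialUnitaryGroup (Fin n ⊕ Fin 1) ℂ)
    (t : ℝ) :
    Matrix.fromBlocks
        (A - Matrix.of fun i j => b i * star (c j) * (Real.sin t : ℂ))
        (Matrix.of fun i (_ : Fin 1) => b i * (Real.cos t : ℂ))
        (Matrix.of fun (_ : Fin 1) j => star (c j) * (Real.cos t : ℂ))
        (Matrix.of fun (_ : Fin 1) (_ : Fin 1) => (Real.sin t : ℂ)) ∈
      Matrix.specialUnitaryGroup (Fin n ⊕ Fin 1) ℂ := by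
  set bM : Matrix (Fin n) (Fin 1) ℂ := Matrix.of fun i _ => b i with hbM
  set cM : Matrix (Fin 1) (Fin n) ℂ := Matrix.of fun _ j => star (c j) with hcM
  set s : ℂ := (Real.sin t : ℂ) with hs
  set co : ℂ := (Real.cos t : ℂ) with hco
  have hsco : s ^ 2 + co ^ 2 = 1 := by
    rw [hs, hco]; push_cast; exact_mod_cast congrArg (Complex.ofReal ·) (Real.sin_sq_add_cos_sq t)
  have e1 : (Matrix.of fun i j => b i * star (c j) * s) = s • (bM * cM) := by
    ext i j
    simp [Matrix.mul_apply, Fin.sum_univ_one, hbM, hcM]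
    ring
  have e2 : (Matrix.of fun i (_ : Fin 1) => b i * co) = co • bM := by
    ext i j; simp [hbM, mul_comm]
  have e3 : (Matrix.of fun (_ : Fin 1) j => star (c j) * co) = co • cM := by
    ext i j; simp [hcM, mul_comm]
  have e4 : (Matrix.of fun (_ : Fin 1) (_ : Fin 1) => s) = s • (1 : Matrix (Fin 1) (Fin 1) ℂ) := by
    ext i j; fin_cases i; fin_cases j; simp [Matrix.one_apply]
  rw [e1, e2, e3, e4]
  rw [Matrix.mem_specialUnitaryGroup_iff] at hblock ⊢
  obtain ⟨hU, hdet⟩ := hblock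
  rw [Matrix.mem_unitaryGroup_iff] at hU
  rw [Matrix.mem_unitaryGroup_iff]
  rw [Matrix.star_eq_conjTranspose, Matrix.fromBlocks_conjTranspose, Matrix.conjTranspose_zero,
    Matrix.fromBlocks_multiply, ← Matrix.fromBlocks_one, Matrix.fromBlocks_inj] at hU
  obtain ⟨h1, h2, h3, h4⟩ := hU
  rw [Matrix.mul_zero, add_zero] at h2
  rw [Matrix.zero_mul, add_zero] at h3
  rw [Matrix.zero_mul, add_zero] at h4
  have hss : star s = s := by rw [hs, Complex.star_def, Complex.conj_ofReal]
  have hcc : star co = co := by rw [hco, Complex.star_def, Complex.conj_ofReal]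
  have h2' : ∀ (Z : Matrix (Fin 1) (Fin 1) ℂ), A * (cMᴴ * Z) = 0 := by
    intro Z; rw [← Matrix.mul_assoc, h2, Matrix.zero_mul]
  have h4' : ∀ (Z : Matrix (Fin 1) (Fin 1) ℂ), cM * (cMᴴ * Z) = Z := by
    intro Z; rw [← Matrix.mul_assoc, h4, Matrix.one_mul]
  have h4'' : ∀ (Z : Matrix (Fin 1) (Fin n) ℂ), cM * (cMᴴ * Z) = Z := by
    intro Z; rw [← Matrix.mul_assoc, h4, Matrix.one_mul]
  have h2'' : ∀ (Z : Matrix (Fin 1) (Fin n) ℂ), A * (cMᴴ * Z) = 0 := by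
    intro Z; rw [← Matrix.mul_assoc, h2, Matrix.zero_mul]
  have hsco' : s * s + co * co = 1 := by rw [← hsco]; ring
  constructor
  · rw [Matrix.star_eq_conjTranspose, Matrix.fromBlocks_conjTranspose, Matrix.fromBlocks_multiply,
      ← Matrix.fromBlocks_one, Matrix.fromBlocks_inj]
    refine ⟨?_, ?_, ?_, ?_⟩ <;>
      simp only [Matrix.conjTranspose_sub, Matrix.conjTranspose_smul, Matrix.conjTranspose_mul,
        Matrix.conjTranspose_one, hss, hcc, Matrix.sub_mul, Matrix.mul_sub, Matrix.smul_mul,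
        Matrix.mul_smul, smul_smul, Matrix.mul_assoc, h2, h2', h2'', h3, h4, h4', h4'',
        Matrix.mul_zero, Matrix.zero_mul, smul_zero, zero_smul, Matrix.mul_one, Matrix.one_mul,
        sub_zero, zero_sub, add_zero, zero_add, neg_neg, sub_neg_eq_add, smul_neg, smul_sub,
        Matrix.mul_neg, Matrix.neg_mul]
    all_goals (first
        | (rw [add_assoc, ← add_smul, hsco', one_smul, h1])
        | (rw [add_comm, ← add_smul, hsco', one_smul])
        | module
        | (simp only [Matrix.mul_neg, Matrix.mul_smul, smul_neg]; module))
  · set U := Matrix.fromBlocks A bM cM (0 : Matrix (Fin 1) (Fin 1) ℂ) with hUdef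
    set X : Matrix (Fin n ⊕ Fin 1) (Fin 1 ⊕ Fin 1) ℂ :=
      Matrix.fromBlocks cMᴴ 0 0 1 with hX
    set Y : Matrix (Fin 1 ⊕ Fin 1) (Fin n ⊕ Fin 1) ℂ :=
      Matrix.fromBlocks ((co - 1) • cM) (s • 1) ((-s) • cM) ((co - 1) • 1) with hY
    set K : Matrix (Fin n ⊕ Fin 1) (Fin n ⊕ Fin 1) ℂ := 1 + X * Y with hK
    have hKb : K = Matrix.fromBlocks (1 + (co - 1) • (cMᴴ * cM)) (s • cMᴴ)
        ((-s) • cM) (co • (1 : Matrix (Fin 1) (Fin 1) ℂ)) := by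
      rw [hK, hX, hY, Matrix.fromBlocks_multiply, ← Matrix.fromBlocks_one,
        Matrix.fromBlocks_add, Matrix.fromBlocks_inj]
      refine ⟨?_, ?_, ?_, ?_⟩ <;>
        simp only [Matrix.mul_smul, Matrix.smul_mul, Matrix.mul_zero, Matrix.zero_mul,
          smul_zero, zero_smul, add_zero, zero_add, Matrix.mul_one, Matrix.one_mul]
      all_goals (first
        | (rw [add_assoc, ← add_smul, hsco', one_smul, h1])
        | (rw [add_comm, ← add_smul, hsco', one_smul])
        | module
        | (simp only [Matrix.mul_neg, Matrix.mul_smul, smul_neg]; module))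
    have hMUK : Matrix.fromBlocks (A - s • (bM * cM)) (co • bM) (co • cM)
        (s • (1 : Matrix (Fin 1) (Fin 1) ℂ)) = U * K := by
      rw [hUdef, hKb, Matrix.fromBlocks_multiply, Matrix.fromBlocks_inj]
      refine ⟨?_, ?_, ?_, ?_⟩ <;>
        simp only [Matrix.mul_add, Matrix.add_mul, Matrix.mul_smul, Matrix.smul_mul,
          Matrix.mul_zero, Matrix.zero_mul, smul_zero, zero_smul, add_zero, zero_add,
          Matrix.mul_one, Matrix.one_mul, Matrix.mul_assoc, h2, h2', h2'', h3, h4, h4', h4'',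
          smul_smul, neg_smul]
      all_goals (first
        | (rw [add_assoc, ← add_smul, hsco', one_smul, h1])
        | (rw [add_comm, ← add_smul, hsco', one_smul])
        | module
        | (simp only [Matrix.mul_neg, Matrix.mul_smul, smul_neg]; module))
    have hYX : Y * X = Matrix.fromBlocks ((co - 1) • (1 : Matrix (Fin 1) (Fin 1) ℂ)) (s • 1)
        ((-s) • 1) ((co - 1) • 1) := by
      rw [hY, hX, Matrix.fromBlocks_multiply, Matrix.fromBlocks_inj]
      refine ⟨?_, ?_, ?_, ?_⟩ <;>
        simp only [Matrix.mul_smul, Matrix.smul_mul, Matrix.mul_zero, Matrix.zero_mul,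
          smul_zero, zero_smul, add_zero, zero_add, Matrix.mul_one, Matrix.one_mul, h4]
      all_goals (first
        | (rw [add_assoc, ← add_smul, hsco', one_smul, h1])
        | (rw [add_comm, ← add_smul, hsco', one_smul])
        | module
        | (simp only [Matrix.mul_neg, Matrix.mul_smul, smul_neg]; module))
    rw [hMUK, Matrix.det_mul, hdet, one_mul, hK, Matrix.det_one_add_mul_comm]
    rw [hYX]
    have hsum : (1 : Matrix (Fin 1 ⊕ Fin 1) (Fin 1 ⊕ Fin 1) ℂ) +
        Matrix.fromBlocks ((co - 1) • (1 : Matrix (Fin 1) (Fin 1) ℂ)) (s • 1)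
          ((-s) • 1) ((co - 1) • 1) =
        Matrix.fromBlocks (co • (1 : Matrix (Fin 1) (Fin 1) ℂ)) (s • 1) ((-s) • 1) (co • 1) := by
      rw [← Matrix.fromBlocks_one, Matrix.fromBlocks_add, Matrix.fromBlocks_inj]
      refine ⟨by module, by module, by module, by module⟩
    rw [hsum, ← Matrix.det_submatrix_equiv_self finSumFinEquiv.symm]
    have ha : (finSumFinEquiv.symm (0 : Fin 2) : Fin 1 ⊕ Fin 1) = Sum.inl 0 := rfl
    have hb' : (finSumFinEquiv.symm (1 : Fin 2) : Fin 1 ⊕ Fin 1) = Sum.inr 0 := rfl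
    rw [Matrix.det_fin_two]
    simp only [Matrix.submatrix_apply, ha, hb', Matrix.fromBlocks_apply₁₁,
      Matrix.fromBlocks_apply₁₂, Matrix.fromBlocks_apply₂₁, Matrix.fromBlocks_apply₂₂,
      Matrix.smul_apply, Matrix.one_apply_eq, smul_eq_mul, mul_one]
    linear_combination hsco'
end

section
/- For every unit vector z ∈ ℂⁿ and every t ∈ ℝ, the matrix e^{−it}·(1 + (e^{int} − 1)·z·(conj z)ᵗ) lies in SU(n). -/
theorem phi_hat_mem_SU (n : ℕ) (z : Fin n → ℂ) (hz : ∑ i, ‖z i‖ ^ 2 = 1) (t : ℝ) :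
    Complex.exp (-(Complex.I * t)) •
        (1 + (Complex.exp (Complex.I * n * t) - 1) •
          Matrix.of fun i j => z i * star (z j)) ∈
      Matrix.specialUnitaryGroup (Fin n) ℂ := by
  set a := Complex.exp (Complex.I * n * t) with ha_def
  set c := Complex.exp (-(Complex.I * t)) with hc_def
  set P : Matrix (Fin n) (Fin n) ℂ := Matrix.of fun i j => z i * star (z j) with hP_def
  -- scalar facts
  have h1 : ∑ i, z i * star (z i) = 1 := by
    have h : ((∑ i, ‖z i‖ ^ 2 : ℝ) : ℂ) = 1 := by exact_mod_cast congrArg Complex.ofReal hz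
    rw [← h]
    push_cast
    refine Finset.sum_congr rfl fun i _ => ?_
    rw [RCLike.star_def, Complex.mul_conj']
  have hstarc : star c = Complex.exp (Complex.I * t) := by
    rw [hc_def, RCLike.star_def, ← Complex.exp_conj]
    simp [Complex.conj_ofReal]
  have hstara : star a = Complex.exp (-(Complex.I * n * t)) := by
    rw [ha_def, RCLike.star_def, ← Complex.exp_conj]
    simp [Complex.conj_ofReal]
  have hcc : c * star c = 1 := by
    rw [hstarc, hc_def, ← Complex.exp_add]
    simp
  have haa : a * star a = 1 := by
    rw [hstara, ha_def, ← Complex.exp_add]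
    simp
  have hcn : c ^ n * a = 1 := by
    rw [hc_def, ha_def, ← Complex.exp_nat_mul, ← Complex.exp_add]
    rw [show (n : ℂ) * -(Complex.I * t) + Complex.I * n * t = 0 by ring]
    exact Complex.exp_zero
  -- matrix facts
  have hPP : P * P = P := by
    ext i j
    simp only [Matrix.mul_apply, hP_def, Matrix.of_apply]
    calc ∑ k, z i * star (z k) * (z k * star (z j))
        = (∑ k, z k * star (z k)) * (z i * star (z j)) := by
          rw [Finset.sum_mul]
          exact Finset.sum_congr rfl fun k _ => by ring
      _ = z i * star (z j) := by rw [h1, one_mul]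
  have hPH : star P = P := by
    ext i j
    simp only [Matrix.star_apply, hP_def, Matrix.of_apply, star_mul, star_star]
  rw [Matrix.mem_specialUnitaryGroup_iff]
  constructor
  · rw [Matrix.mem_unitaryGroup_iff, star_smul, Matrix.smul_mul, Matrix.mul_smul, smul_smul]
    have expand : (1 + (a - 1) • P) * star (1 + (a - 1) • P)
        = 1 + (a * star a - 1) • P := by
      rw [star_add, star_one, star_smul, hPH, star_sub, star_one]
      simp only [add_mul, mul_add, one_mul, mul_one, Matrix.smul_mul, Matrix.mul_smul,
        smul_smul, hPP]
      module
    rw [expand, haa, sub_self, zero_smul, add_zero, hcc, one_smul]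
  · rw [Matrix.det_smul]
    have hcol : (1 : Matrix (Fin n) (Fin n) ℂ) + (a - 1) • P
        = 1 + Matrix.replicateCol Unit ((a - 1) • z) * Matrix.replicateRow Unit (star z) := by
      ext i j
      simp [hP_def, Matrix.mul_apply, Matrix.replicateCol, Matrix.replicateRow, mul_assoc]
    rw [hcol, Matrix.det_one_add_replicateCol_mul_replicateRow]
    have hdot : dotProduct (star z) ((a - 1) • z) = a - 1 := by
      simp only [dotProduct, Pi.smul_apply, Pi.star_apply, smul_eq_mul]
      calc ∑ i, star (z i) * ((a - 1) * z i)
          = (a - 1) * ∑ i, z i * star (z i) := by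
            rw [Finset.mul_sum]
            exact Finset.sum_congr rfl fun i _ => by ring
        _ = a - 1 := by rw [h1, mul_one]
    rw [hdot]
    rw [show (1 : ℂ) + (a - 1) = a by ring, Fintype.card_fin]
    exact hcn
end

section
/- Fix n ≥ 1 and a unit vector z ∈ ℂⁿ. For j = 1,…,n define ψⱼ(t) = e^{−it}·(1 + (e^{int} − 1)·Pⱼ), where Pⱼ is the orthogonal projection onto the j-th column of a fixed matrix η ∈ SU(n) (i.e., Pⱼ = vⱼ·(conj vⱼ)ᵗ with vⱼ the j-th column of η). Then the matrices ψ₁(t), …, ψₙ(t) commute pairwise and their product ψ₁(t)·ψ₂(t)·⋯·ψₙ(t) equals the identity matrix for every t ∈ ℝ. -/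
open Matrix Complex

/-- For pairwise-annihilating matrices, a product of `1 + c • P j` over a
nodup list telescopes to `1 + c • sum`. -/
private lemma aux_mul_sum_zero {n : ℕ} (P : Fin n → Matrix (Fin n) (Fin n) ℂ)
    (hP : ∀ i j, i ≠ j → P i * P j = 0) (a : Fin n) :
    ∀ l : List (Fin n), a ∉ l → P a * (l.map P).sum = 0 := by
  intro l
  induction l with
  | nil => simp
  | cons b tl ih =>
    intro h
    simp only [List.map_cons, List.sum_cons, mul_add]
    rw [hP a b (fun hab => h (hab ▸ List.mem_cons_self)),
      ih (fun hm => h (List.mem_cons_of_mem _ hm)), add_zero]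

private lemma aux_prod_one_add {n : ℕ} (c : ℂ) (P : Fin n → Matrix (Fin n) (Fin n) ℂ)
    (hP : ∀ i j, i ≠ j → P i * P j = 0) :
    ∀ l : List (Fin n), l.Nodup →
      (l.map (fun j => (1 : Matrix (Fin n) (Fin n) ℂ) + c • P j)).prod
        = 1 + c • (l.map P).sum := by
  intro l
  induction l with
  | nil => simp
  | cons a tl ih =>
    intro hnd
    rw [List.nodup_cons] at hnd
    simp only [List.map_cons, List.prod_cons, List.sum_cons, ih hnd.2]
    have h0 : P a * (tl.map P).sum = 0 := aux_mul_sum_zero P hP a tl hnd.1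
    simp only [mul_add, add_mul, one_mul, mul_one, smul_mul_assoc, mul_smul_comm, h0,
      smul_zero, add_zero, smul_add]
    abel

private lemma aux_comm {m : ℕ} (a c : ℂ) (A B : Matrix (Fin m) (Fin m) ℂ)
    (h : A * B = B * A) :
    (a • ((1 : Matrix (Fin m) (Fin m) ℂ) + c • A)) * (a • (1 + c • B))
      = (a • (1 + c • B)) * (a • (1 + c • A)) := by
  simp only [smul_mul_assoc, mul_smul_comm, mul_add, add_mul, one_mul, mul_one,
    smul_add, smul_smul, h]
  module

private lemma aux_prod_map_smul (m : ℕ) (a : ℂ) :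
    ∀ l : List (Matrix (Fin m) (Fin m) ℂ),
      (l.map (fun M => a • M)).prod = a ^ l.length • l.prod := by
  intro l
  induction l with
  | nil => simp
  | cons M tl ih =>
    simp only [List.map_cons, List.prod_cons, ih, List.length_cons, smul_mul_assoc,
      mul_smul_comm, smul_smul, pow_succ]

theorem psi_commute_and_product_eq_one (n : ℕ) (hn : 1 ≤ n)
    (z : Fin n → ℂ) (hz : ∑ i, ‖z i‖ ^ 2 = 1)
    (η : Matrix (Fin n) (Fin n) ℂ)
    (hη : η ∈ Matrix.specialUnitaryGroup (Fin n) ℂ) :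
    let ψ : Fin n → ℝ → Matrix (Fin n) (Fin n) ℂ := fun j t =>
      Complex.exp (-(Complex.I * t)) •
        (1 + (Complex.exp (Complex.I * n * t) - 1) •
          Matrix.of fun a b => η a j * star (η b j))
    (∀ (i j : Fin n) (t : ℝ), ψ i t * ψ j t = ψ j t * ψ i t) ∧
      ∀ t : ℝ, (List.ofFn fun j : Fin n => ψ j t).prod = 1 := by
  intro ψ
  set P : Fin n → Matrix (Fin n) (Fin n) ℂ :=
    fun j => Matrix.of fun a b => η a j * star (η b j) with hPdef
  have hU : η ∈ Matrix.unitaryGroup (Fin n) ℂ :=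
    (Matrix.mem_specialUnitaryGroup_iff.mp hη).1
  have h1 : star η * η = 1 := Matrix.mem_unitaryGroup_iff'.mp hU
  have h2 : η * star η = 1 := Matrix.mem_unitaryGroup_iff.mp hU
  have horth : ∀ i j, ∑ x, star (η x i) * η x j = if i = j then 1 else 0 := by
    intro i j
    have := congrFun (congrFun h1 i) j
    simpa [Matrix.mul_apply, Matrix.one_apply, Matrix.conjTranspose_apply] using this
  have hPP : ∀ i j, P i * P j = if i = j then P i else 0 := by
    intro i j
    ext a b
    simp only [hPdef, Matrix.mul_apply, Matrix.of_apply]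
    have key : ∀ x : Fin n, η a i * star (η x i) * (η x j * star (η b j))
        = (star (η x i) * η x j) * (η a i * star (η b j)) := fun x => by ring
    rw [Finset.sum_congr rfl (fun x _ => key x), ← Finset.sum_mul, horth]
    split_ifs with h <;> simp [h]
  have hP0 : ∀ i j, i ≠ j → P i * P j = 0 := by
    intro i j hij; rw [hPP, if_neg hij]
  have hsum : ∑ j, P j = 1 := by
    ext a b
    have := congrFun (congrFun h2 a) b
    simpa [Matrix.sum_apply, hPdef, Matrix.mul_apply, Matrix.conjTranspose_apply] using this
  constructor
  · intro i j t
    have hc : P i * P j = P j * P i := by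
      rcases eq_or_ne i j with h | h
      · rw [h]
      · rw [hPP, hPP, if_neg h, if_neg h.symm]
    exact aux_comm _ _ _ _ hc
  · intro t
    set a : ℂ := Complex.exp (-(Complex.I * t)) with ha
    set c : ℂ := Complex.exp (Complex.I * n * t) - 1 with hcdef
    have : (List.ofFn fun j : Fin n => ψ j t)
        = ((List.finRange n).map (fun j => (1 : Matrix (Fin n) (Fin n) ℂ) + c • P j)).map
          (fun M => a • M) := by
      rw [List.ofFn_eq_map, List.map_map]
      rfl
    rw [this, aux_prod_map_smul, aux_prod_one_add c P hP0 _ (List.nodup_finRange n)]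
    have hsum' : ((List.finRange n).map P).sum = 1 := by
      rw [← Fin.sum_univ_def, hsum]
    rw [hsum', List.length_map, List.length_finRange]
    have h3 : (1 : Matrix (Fin n) (Fin n) ℂ) + c • 1 = (1 + c) • 1 := by
      rw [add_smul, one_smul]
    rw [h3, smul_smul]
    have h4 : a ^ n * (1 + c) = 1 := by
      rw [ha, hcdef, ← Complex.exp_nat_mul]
      ring_nf
      rw [← Complex.exp_add]
      ring_nf
      exact Complex.exp_zero
    rw [h4, one_smul]
end

section
/- Let A ∈ Sp(m) ⊂ SU(2m) (i.e., AᵗJA = J) have first column z ∈ ℂ^{2m}, and let t ∈ ℝ. Then A·diag(e^{i(2m−2)t}, e^{i(2m−2)t}, e^{−2it}, …, e^{−2it})·A⁻¹ = e^{−2it}·(1 + (e^{2mit} − 1)·(z·(conj z)ᵗ − J·(conj z)·zᵗ·J)), where J is the block-diagonal matrix with 2×2 blocks [[0,−1],[1,0]]. -/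
/-- The 2m×2m block-diagonal matrix with diagonal 2×2 blocks [[0,−1],[1,0]]. -/
def Jmat (m : ℕ) : Matrix (Fin (2 * m)) (Fin (2 * m)) ℂ :=
  Matrix.of fun i j =>
    if (i : ℕ) = (j : ℕ) + 1 ∧ (j : ℕ) % 2 = 0 then 1
    else if (j : ℕ) = (i : ℕ) + 1 ∧ (i : ℕ) % 2 = 0 then -1 else 0

lemma Jmat_antisymm (m : ℕ) (a b : Fin (2 * m)) : Jmat m a b = - Jmat m b a := by
  simp only [Jmat, Matrix.of_apply]
  split_ifs <;> try ring1
  all_goals (exfalso; omega)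

lemma Jmat_star (m : ℕ) (a b : Fin (2 * m)) : star (Jmat m a b) = Jmat m a b := by
  simp only [Jmat, Matrix.of_apply]
  split_ifs <;> simp

lemma Jmat_col0 (m : ℕ) (h : 0 < 2 * m) (k : Fin (2 * m)) :
    Jmat m k ⟨0, h⟩ = if (k : ℕ) = 1 then 1 else 0 := by
  have h0 : ((⟨0, h⟩ : Fin (2 * m)) : ℕ) = 0 := rfl
  simp only [Jmat, Matrix.of_apply, h0]
  split_ifs <;> try rfl
  all_goals (exfalso; simp_all)

theorem symplectic_conjugated_diagonal_formula (m : ℕ) (hm : 0 < m)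
    (A : Matrix (Fin (2 * m)) (Fin (2 * m)) ℂ)
    (hA : A ∈ Matrix.specialUnitaryGroup (Fin (2 * m)) ℂ)
    (hSp : A.transpose * Jmat m * A = Jmat m)
    (z : Fin (2 * m) → ℂ)
    (hz : ∀ i, A i ⟨0, by omega⟩ = z i) (t : ℝ) :
    A * Matrix.diagonal (fun j : Fin (2 * m) => if (j : ℕ) < 2 then
        Complex.exp (Complex.I * (2 * (m : ℂ) - 2) * t) else
        Complex.exp (-(2 * Complex.I * t))) * A⁻¹ =
      Complex.exp (-(2 * Complex.I * t)) •
        (1 + (Complex.exp (2 * (m : ℂ) * Complex.I * t) - 1) •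
          (Matrix.of (fun i j => z i * star (z j)) -
            Jmat m * Matrix.of (fun i j => star (z i) * z j) * Jmat m)) := by
  have h0m : 0 < 2 * m := by omega
  have h2m : 1 < 2 * m := by omega
  set i0 : Fin (2 * m) := ⟨0, h0m⟩ with hi0def
  set i1 : Fin (2 * m) := ⟨1, h2m⟩ with hi1def
  have hz' : ∀ k, A k i0 = z k := hz
  obtain ⟨hU, -⟩ := Matrix.mem_specialUnitaryGroup_iff.mp hA
  have h1 : A * A.conjTranspose = 1 := Matrix.mem_unitaryGroup_iff.mp hU
  have hAinv : A⁻¹ = A.conjTranspose := Matrix.inv_eq_right_inv h1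
  have hmaps : A.map star * A.transpose = 1 := by
    have h3 := congrArg Matrix.transpose h1
    simpa [Matrix.transpose_mul, Matrix.conjTranspose, Matrix.transpose_map,
      Function.comp] using h3
  have hJA : Jmat m * A = A.map star * Jmat m := by
    have h5 : A.map star * (A.transpose * Jmat m * A) = A.map star * Jmat m := by rw [hSp]
    rw [← Matrix.mul_assoc, ← Matrix.mul_assoc, hmaps, Matrix.one_mul] at h5
    exact h5
  -- the second column of A is star of (Jmat applied to z)
  have hcol : ∀ i, A i i1 = star (∑ k, Jmat m i k * z k) := by
    intro i
    have h4 : (Jmat m * A) i i0 = (A.map star * Jmat m) i i0 := by rw [hJA]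
    simp only [Matrix.mul_apply, Matrix.map_apply] at h4
    have hL : ∑ k, Jmat m i k * A k i0 = ∑ k, Jmat m i k * z k :=
      Finset.sum_congr rfl fun k _ => by rw [hz' k]
    have hR : ∑ k, star (A i k) * Jmat m k i0 = star (A i i1) := by
      rw [Finset.sum_eq_single i1 (fun k _ hk => by
          rw [Jmat_col0 m h0m, if_neg (fun h => hk (Fin.ext h)), mul_zero])
        (fun h => absurd (Finset.mem_univ i1) h)]
      rw [Jmat_col0 m h0m, if_pos (show ((i1 : Fin (2 * m)) : ℕ) = 1 from rfl), mul_one]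
    rw [hL, hR] at h4
    calc A i i1 = star (star (A i i1)) := (star_star _).symm
      _ = star (∑ k, Jmat m i k * z k) := by rw [← h4]
  have hT : ∀ a, star (∑ k, Jmat m a k * z k) = ∑ k, Jmat m a k * star (z k) := by
    intro a
    simp only [star_sum, star_mul', Jmat_star]
  have h01 : i0 ≠ i1 := by simp [hi0def, hi1def, Fin.ext_iff]
  rw [hAinv, Matrix.mul_assoc]
  ext i j
  set c : ℂ := Complex.exp (-(2 * Complex.I * t)) with hc
  set e : ℂ := Complex.exp (2 * (m : ℂ) * Complex.I * t) with he
  have hE : Complex.exp (Complex.I * (2 * (m : ℂ) - 2) * t) = c * e := by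
    rw [hc, he, ← Complex.exp_add]; congr 1; ring
  rw [Matrix.mul_apply]
  simp only [Matrix.diagonal_mul, Matrix.conjTranspose_apply, Matrix.smul_apply,
    Matrix.add_apply, Matrix.sub_apply, Matrix.one_apply, Matrix.of_apply,
    Matrix.mul_apply, smul_eq_mul, Matrix.diagonal_apply, ite_mul, zero_mul,
    Finset.sum_ite_eq, Finset.mem_univ, if_true]
  rw [hE]
  have key1 : ∀ k : Fin (2 * m),
      (A i k * if (k : ℕ) < 2 then c * e * star (A j k) else c * star (A j k)) =
      c * (A i k * star (A j k)) +
        c * (e - 1) * (A i k * (if (k : ℕ) < 2 then 1 else 0) * star (A j k)) := by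
    intro k
    by_cases hk : (k : ℕ) < 2 <;> simp only [hk, if_true, if_false, reduceIte] <;> ring
  rw [Finset.sum_congr rfl fun k _ => key1 k, Finset.sum_add_distrib,
    ← Finset.mul_sum, ← Finset.mul_sum]
  have hAA : ∑ k, A i k * star (A j k) = if i = j then 1 else 0 := by
    have h6 : (A * A.conjTranspose) i j = (1 : Matrix (Fin (2 * m)) (Fin (2 * m)) ℂ) i j := by
      rw [h1]
    simpa only [Matrix.mul_apply, Matrix.conjTranspose_apply, Matrix.one_apply] using h6
  rw [hAA]
  have key2 : ∀ k : Fin (2 * m),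
      A i k * (if (k : ℕ) < 2 then (1 : ℂ) else 0) * star (A j k) =
      (if k = i0 then A i i0 * star (A j i0) else 0) +
        (if k = i1 then A i i1 * star (A j i1) else 0) := by
    intro k
    by_cases hk0 : k = i0
    · subst hk0
      have : ((i0 : Fin (2 * m)) : ℕ) < 2 := by simp [hi0def]
      simp [this, h01]
    · by_cases hk1 : k = i1
      · subst hk1
        have : ((i1 : Fin (2 * m)) : ℕ) < 2 := by simp [hi1def]
        simp [this, Ne.symm h01]
      · have hk2 : ¬ ((k : ℕ) < 2) := by
          intro hlt
          have : (k : ℕ) = 0 ∨ (k : ℕ) = 1 := by omega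
          rcases this with h | h
          · exact hk0 (Fin.ext h)
          · exact hk1 (Fin.ext h)
        simp [hk0, hk1, hk2]
  rw [Finset.sum_congr rfl fun k _ => key2 k, Finset.sum_add_distrib]
  simp only [Finset.sum_ite_eq', Finset.mem_univ, if_true]
  rw [hz' i, hz' j, hcol i, hcol j, star_star, hT i]
  -- now handle the J*M*J term on the RHS
  have hJMJ : ∑ l, (∑ k, Jmat m i k * (star (z k) * z l)) * Jmat m l j
      = - ((∑ k, Jmat m i k * star (z k)) * (∑ k, Jmat m j k * z k)) := by
    have h6 : ∀ l, (∑ k, Jmat m i k * (star (z k) * z l)) * Jmat m l j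
        = (∑ k, Jmat m i k * star (z k)) * (z l * Jmat m l j) := by
      intro l
      rw [Finset.sum_mul, Finset.sum_mul]
      exact Finset.sum_congr rfl fun k _ => by ring
    rw [Finset.sum_congr rfl fun l _ => h6 l, ← Finset.mul_sum]
    have h7 : ∑ l, z l * Jmat m l j = - ∑ k, Jmat m j k * z k := by
      rw [← Finset.sum_neg_distrib]
      exact Finset.sum_congr rfl fun l _ => by rw [Jmat_antisymm m l j]; ring
    rw [h7]; ring
  rw [hJMJ]
  ring
end
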